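/- arXiv:0804.2745 — 5 statements merged into one kernel-verified Lean document; each statement's English description precedes it below -/
import Mathlib

section
/- For every integer j ≥ 1, the equality of rational numbers Σ_{k=1}^{j} (1/2)_{k−1}·(1/2 + j)_{j−k} / ((k−1)!·(j−k)!) = (2j−1)!!·2^{j−1}/j! holds. -/
/-!
Clearing the factorials turns the summand into `C(j-1, k-1) (1/2)_{k-1} (j+1/2)_{j-k} / (j-1)!`, so
by the Chu–Vandermonde identity for rising factorials the sum is
`(1/2 + (j + 1/2))_{j-1} / (j-1)! = (j+1)_{j-1} / (j-1)! = C(2j-1, j-1)`. On the other side,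
`(2j-1)! = (2j-1)‼ (2j-2)‼ = (2j-1)‼ 2^{j-1} (j-1)!`, so the right-hand side is `C(2j-1, j-1)` too.
-/

open Polynomial Finset Nat

theorem Nat.factorial_two_mul_add_one (m : ℕ) : (2 * m + 1)! = (2 * m + 1)‼ * 2 ^ m * m ! := by
  rw [factorial_eq_mul_doubleFactorial, doubleFactorial_two_mul, mul_assoc]

theorem ascPochhammer_eval_add {R : Type*} [Ring R] {x y : R} (h : Commute x y) (n : ℕ) :
    (ascPochhammer R n).eval (x + y) = ∑ ij ∈ antidiagonal n,
      n.choose ij.1 * ((ascPochhammer R ij.1).eval x * (ascPochhammer R ij.2).eval y) := by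
  simp only [← ascPochhammer_smeval_eq_eval]
  -- `(x)_n = (-1)^n (-x)^{\underline n}` reduces this to the falling-factorial identity.
  rw [← neg_neg (x + y), neg_add, ascPochhammer_smeval_neg_eq_descPochhammer,
    Ring.descPochhammer_smeval_add n h.neg_left.neg_right, smul_sum]
  refine sum_congr rfl fun ij hij => ?_
  rw [← neg_neg x, ← neg_neg y, ascPochhammer_smeval_neg_eq_descPochhammer (-x),
    ascPochhammer_smeval_neg_eq_descPochhammer (-y), neg_neg, neg_neg, ← mem_antidiagonal.mp hij,
    Nat.cast_add, Int.negOnePow_add]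
  simp only [Units.smul_def, zsmul_eq_mul, Units.val_mul, Int.cast_mul]
  conv_rhs => rw [(Int.cast_commute _ _).symm.mul_mul_mul_comm, (Nat.cast_commute _ _).left_comm]

section Field

variable {K : Type*} [Field K] [CharZero K]

theorem sum_range_ascPochhammer_eval_div_factorial (x y : K) (n : ℕ) :
    ∑ i ∈ range (n + 1), (ascPochhammer K i).eval x * (ascPochhammer K (n - i)).eval y
        / ((i ! : K) * ((n - i)! : K)) = (ascPochhammer K n).eval (x + y) / n ! := by
  rw [ascPochhammer_eval_add (Commute.all x y), sum_antidiagonal_eq_sum_range_succ_mk, sum_div]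
  refine sum_congr rfl fun i hi => ?_
  rw [cast_choose K (Nat.lt_succ_iff.mp (mem_range.mp hi))]
  field_simp
  exact (mul_div_mul_right _ _ (Nat.cast_ne_zero.mpr n.factorial_ne_zero)).symm

theorem doubleFactorial_mul_two_pow_div_factorial (m : ℕ) :
    ((2 * m + 1)‼ * 2 ^ m / (m + 1)! : K) = (2 * m + 1).choose m := by
  rw [cast_choose K (by omega), show 2 * m + 1 - m = m + 1 by omega, factorial_two_mul_add_one]
  push_cast
  rw [mul_comm (m ! : K), mul_div_mul_right _ _ (Nat.cast_ne_zero.mpr m.factorial_ne_zero)]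

theorem ascPochhammer_eval_add_two_div_factorial (m : ℕ) :
    ((ascPochhammer K m).eval ((m + 2 : ℕ) : K) / m ! : K) = (2 * m + 1).choose m := by
  rw [← ascPochhammer_eval_cast, ascPochhammer_nat_eq_ascFactorial,
    ascFactorial_eq_factorial_mul_choose, show m + 1 + m = 2 * m + 1 by omega, cast_mul]
  exact mul_div_cancel_left₀ _ (Nat.cast_ne_zero.mpr m.factorial_ne_zero)

end Field

/-- For every integer `j ≥ 1`,
`Σ_{k=1}^{j} (1/2)_{k−1}·(1/2 + j)_{j−k} / ((k−1)!·(j−k)!) = (2j−1)!!·2^{j−1}/j!`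
as rational numbers, where `(a)_n` is the Pochhammer symbol. -/
theorem sum_pochhammer_eq (j : ℕ) (hj : 1 ≤ j) :
    ∑ k ∈ Finset.Icc 1 j,
        (ascPochhammer ℚ (k - 1)).eval (1 / 2) * (ascPochhammer ℚ (j - k)).eval (1 / 2 + (j : ℚ))
          / (((k - 1).factorial : ℚ) * ((j - k).factorial : ℚ))
      = (Nat.doubleFactorial (2 * j - 1) : ℚ) * 2 ^ (j - 1) / (j.factorial : ℚ) := by
  obtain ⟨m, rfl⟩ := Nat.exists_eq_add_of_le' hj
  rw [show Icc 1 (m + 1) = Ico (0 + 1) (m + 1 + 1) from rfl, ← sum_Ico_add', ← range_eq_Ico]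
  simp only [Nat.add_sub_cancel, Nat.add_sub_add_right, show 2 * (m + 1) - 1 = 2 * m + 1 by omega]
  rw [sum_range_ascPochhammer_eval_div_factorial,
    show (1 / 2 + (1 / 2 + ((m + 1 : ℕ) : ℚ))) = ((m + 2 : ℕ) : ℚ) by push_cast; ring,
    ascPochhammer_eval_add_two_div_factorial]
  exact_mod_cast (doubleFactorial_mul_two_pow_div_factorial (K := ℚ) m).symm
end

section
/- For every integer k ≥ 1, there exists a unique polynomial p ∈ ℚ[x] of degree ≤ 2k−1 such that: p(−i) = 0 for all integers i with 1 ≤ i ≤ k−1; p takes the same value at every point of the set S(k) = {1/2 − i : i = 0, 1, …, k}; and p(0) = (−1)^{k−1}·(2k−3)!!/k!. Moreover, this polynomial equals r_{(k)}. -/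
open Polynomial

def rCond (k : ℕ) (p : Polynomial ℚ) : Prop :=
  p.natDegree ≤ 2 * k - 1 ∧
  (∀ i : ℕ, 1 ≤ i → i ≤ k - 1 → p.eval (-(i : ℚ)) = 0) ∧
  (∀ i : ℕ, i ≤ k →
    p.eval (1 / 2 - (i : ℚ))
      = (-2 : ℚ) ^ (-((k : ℤ) - 1)) * (ascPochhammer ℚ (k - 1)).eval (1 / 2)
          / ((k - 1).factorial : ℚ))

/-!
Write `A` for the prescribed value of `r_{(k)}` on `S(k)`. Then `r_{(k)} = (X+1)⋯(X+k-1) · h`,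
where `h` is the Lagrange interpolant of degree `≤ k` of `A / ((x+1)⋯(x+k-1))` at the nodes
`1/2 - i`, `0 ≤ i ≤ k`. In the barycentric formula for `h(0)` the `i`-th summand is
`-A·4^k/(2k)! · C(2k, 2i)`, because `(1/2 - i)_k = (-1)^i (1/2)_i (1/2)_{k-i}` and
`n!·(1/2)_n = (2n)!/4^n`. Summing the even binomial coefficients gives
`r_{(k)}(0) = A·4^{k-1}/k = (-1)^{k-1}(2k-3)!!/k!`.

For uniqueness in the characterization, the difference `d` of two solutions vanishes at
`0, -1, …, -(k-1)` and is constant on `S(k)`, so `d(x) - d(x-1)`, of degree `< deg d ≤ 2k-1`,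
vanishes at the `2k-1` points `0, …, -(k-2)` and `1/2 - i` (`i < k`). Hence `d` is
`1`-periodic, so constant, so `0`.
-/

open Finset Nat

section Pochhammer

variable {R : Type*} [CommRing R]

theorem ascPochhammer_eval_eq_prod_range (n : ℕ) (x : R) :
    (ascPochhammer R n).eval x = ∏ j ∈ range n, (x + j) := by
  induction n with
  | zero => simp
  | succ n ih => rw [ascPochhammer_succ_eval, ih, prod_range_succ]

theorem ascPochhammer_eval_sub_natCast (x : R) {i k : ℕ} (h : i ≤ k) :
    (ascPochhammer R k).eval (x - i) =
      (-1) ^ i * (ascPochhammer R i).eval (1 - x) * (ascPochhammer R (k - i)).eval x := by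
  have hmul := congrArg (eval (x - i)) (ascPochhammer_mul (S := R) i (k - i))
  rw [Nat.add_sub_cancel' h, eval_mul, eval_comp] at hmul
  rw [← hmul, show x - i = -(i - x) by ring, ascPochhammer_eval_neg_eq_descPochhammer,
    descPochhammer_eval_eq_ascPochhammer]
  simp [neg_add_eq_sub]

theorem prod_range_natCast_sub_self (i : ℕ) :
    ∏ j ∈ range i, ((j : R) - i) = (-1) ^ i * i ! := by
  calc ∏ j ∈ range i, ((j : R) - i) = ∏ j ∈ range i, (-1) * ((i : R) - j) :=
        prod_congr rfl fun j _ => by ring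
    _ = (-1) ^ i * i ! := by
        rw [prod_mul_distrib, prod_const, card_range, Finset.prod_range_natCast_sub,
          ← descFactorial_eq_prod_range, descFactorial_self]

theorem prod_erase_range_natCast_sub {i k : ℕ} (h : i ≤ k) :
    ∏ j ∈ (range (k + 1)).erase i, ((j : R) - i) = (-1) ^ i * i ! * (k - i)! := by
  have hsplit : (range (k + 1)).erase i = range i ∪ Ico (i + 1) (k + 1) := by
    ext j; simp only [mem_erase, mem_range, mem_union, mem_Ico]; omega
  rw [hsplit, prod_union (disjoint_left.2 fun j hj hj' => by
    simp only [mem_range, mem_Ico] at hj hj'; omega),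
    prod_range_natCast_sub_self, prod_Ico_eq_prod_range, show k + 1 - (i + 1) = k - i by omega,
    ← prod_range_add_one_eq_factorial (k - i), Nat.cast_prod]
  exact congrArg _ (prod_congr rfl fun j _ => by push_cast; ring)

end Pochhammer

section CharZero

variable {K : Type*} [Field K] [CharZero K]

theorem natCast_add_half_ne_natCast (m n : ℕ) : (m : K) + 1 / 2 ≠ n := by
  intro h
  have : ((2 * m + 1 : ℕ) : K) = (2 * n : ℕ) := by push_cast; linear_combination 2 * h
  exact absurd (Nat.cast_injective this) (by omega)

theorem injective_sumElim_neg_natCast_half_sub {α β : Type*}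
    {g : α → ℕ} {h : β → ℕ} (hg : Function.Injective g) (hh : Function.Injective h) :
    Function.Injective (Sum.elim (fun a => -(g a : K)) (fun b => 1 / 2 - (h b : K))) := by
  refine Function.Injective.sumElim (fun a b hab => hg (by simpa using hab))
    (fun a b hab => hh (by simpa using hab)) fun a b hab => ?_
  exact natCast_add_half_ne_natCast (K := K) (g a) (h b) (by linear_combination -hab)

theorem ascPochhammer_eval_half_eq_doubleFactorial (n : ℕ) :
    (ascPochhammer K n).eval (1 / 2) = (2 * n - 1)‼ / 2 ^ n := by
  induction n with
  | zero => simp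
  | succ n ih =>
    rw [ascPochhammer_succ_eval, ih, show 2 * (n + 1) - 1 = 2 * n + 1 by omega,
      doubleFactorial_add_one]
    push_cast
    field_simp
    ring

theorem ascPochhammer_eval_half_eq_factorial (n : ℕ) :
    (ascPochhammer K n).eval (1 / 2) = (2 * n)! / (4 ^ n * n !) := by
  induction n with
  | zero => simp
  | succ n ih =>
    rw [ascPochhammer_succ_eval, ih, show 2 * (n + 1) = 2 * n + 1 + 1 by ring, factorial_succ,
      factorial_succ, factorial_succ]
    push_cast
    field_simp
    ring

end CharZero

theorem sum_range_two_mul {M : Type*} [AddCommMonoid M] (f : ℕ → M) (n : ℕ) :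
    ∑ j ∈ range (2 * n), f j = ∑ i ∈ range n, (f (2 * i) + f (2 * i + 1)) := by
  induction n with
  | zero => simp
  | succ n ih =>
    rw [show 2 * (n + 1) = 2 * n + 1 + 1 by ring, sum_range_succ, sum_range_succ, ih,
      sum_range_succ, add_assoc]

theorem sum_range_choose_two_mul {k : ℕ} (hk : k ≠ 0) :
    ∑ i ∈ range (k + 1), (2 * k).choose (2 * i) = 2 ^ (2 * k - 1) := by
  obtain ⟨n, rfl⟩ := exists_eq_succ_of_ne_zero hk
  have hall : ∑ j ∈ range (2 * (n + 1)), (2 * n + 1).choose (j + 1) + 1 = 2 ^ (2 * n + 1) := by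
    rw [← sum_range_choose, sum_range_succ' _ (2 * n + 1),
      show 2 * (n + 1) = 2 * n + 1 + 1 by ring, sum_range_succ, choose_succ_self, add_zero,
      choose_zero_right]
  rw [sum_range_two_mul] at hall
  rw [sum_range_succ', choose_zero_right, show 2 * (n + 1) - 1 = 2 * n + 1 by omega, ← hall]
  exact congrArg (· + 1) (sum_congr rfl fun i _ => choose_succ_succ' (2 * n + 1) (2 * i + 1))

section Difference

variable {R : Type*} [CommRing R] [IsDomain R]

theorem natDegree_sub_comp_X_sub_C_le (p : R[X]) (a : R) :
    (p - p.comp (X - C a)).natDegree ≤ p.natDegree - 1 := by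
  rcases eq_or_ne p.natDegree 0 with h0 | h0
  · rw [eq_C_of_natDegree_eq_zero h0, C_comp, sub_self, natDegree_zero]
    exact Nat.zero_le _
  have hp : p ≠ 0 := fun h => h0 (by simp [h])
  have hdeg : (p.comp (X - C a)).natDegree = p.natDegree := by
    rw [natDegree_comp, natDegree_X_sub_C, mul_one]
  have hlc : p.leadingCoeff = (p.comp (X - C a)).leadingCoeff := by
    rw [leadingCoeff_comp (by rw [natDegree_X_sub_C]; exact one_ne_zero),
      (monic_X_sub_C a).leadingCoeff, one_pow, mul_one]
  have hlt := degree_sub_lt_left (by rw [degree_eq_natDegree hp, degree_eq_natDegree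
    (fun h => h0 (by rw [← hdeg, h, natDegree_zero])), hdeg]) hp hlc
  rcases eq_or_ne (p - p.comp (X - C a)) 0 with he | he
  · rw [he, natDegree_zero]; exact Nat.zero_le _
  · have := natDegree_lt_natDegree he hlt
    omega

variable [CharZero R]

theorem eq_C_eval_zero_of_eval_sub_one {p : R[X]} (h : ∀ x, p.eval (x - 1) = p.eval x) :
    p = C (p.eval 0) := by
  have hneg : ∀ n : ℕ, p.eval (-(n : R)) = p.eval 0 := by
    intro n
    induction n with
    | zero => simp
    | succ n ih => rw [Nat.cast_succ, neg_add', h, ih]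
  have hinj : Function.Injective fun n : ℕ => -(n : R) := fun m n hmn =>
    Nat.cast_injective (neg_injective hmn)
  refine eq_of_infinite_eval_eq _ _ ((Set.infinite_range_of_injective hinj).mono ?_)
  rintro _ ⟨n, rfl⟩
  simp [hneg n]

theorem eq_C_eval_zero_of_natDegree_le_card {ι : Type*} [Fintype ι] {f : ι → R}
    (hf : Function.Injective f) {p : R[X]} (hp : p.natDegree ≤ Fintype.card ι)
    (h : ∀ i, p.eval (f i - 1) = p.eval (f i)) :
    p = C (p.eval 0) := by
  rcases eq_or_ne p.natDegree 0 with h0 | h0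
  · rw [← coeff_zero_eq_eval_zero]; exact eq_C_of_natDegree_eq_zero h0
  have hshift : p - p.comp (X - C 1) = 0 :=
    eq_zero_of_natDegree_lt_card_of_eval_eq_zero _ hf (fun i => by simp [eval_comp, h i])
      ((natDegree_sub_comp_X_sub_C_le p 1).trans_lt (by omega))
  refine eq_C_eval_zero_of_eval_sub_one fun x => ?_
  have hx := congrArg (eval x) hshift
  simp only [eval_sub, eval_comp, eval_X, eval_C, eval_zero] at hx
  linear_combination -hx

end Difference

def halfNode (i : ℕ) : ℚ := 1 / 2 - i

noncomputable def rHalfNodeValue (k : ℕ) : ℚ :=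
  (-2 : ℚ) ^ (-((k : ℤ) - 1)) * (ascPochhammer ℚ (k - 1)).eval (1 / 2)
    / ((k - 1).factorial : ℚ)

noncomputable def rZeroValue (k : ℕ) : ℚ :=
  (-1 : ℚ) ^ (k - 1) * (Nat.doubleFactorial (2 * k - 3) : ℚ) / (k.factorial : ℚ)

def rChar (k : ℕ) (p : ℚ[X]) : Prop :=
  p.natDegree ≤ 2 * k - 1 ∧
  (∀ i : ℕ, 1 ≤ i → i ≤ k - 1 → p.eval (-(i : ℚ)) = 0) ∧
  (∀ i : ℕ, i ≤ k → ∀ i' : ℕ, i' ≤ k →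
    p.eval (1 / 2 - (i : ℚ)) = p.eval (1 / 2 - (i' : ℚ))) ∧
  p.eval 0 = rZeroValue k

noncomputable def rootFactor (k : ℕ) : ℚ[X] := (ascPochhammer ℚ (k - 1)).comp (X + 1)

noncomputable def rCofactor (k : ℕ) : ℚ[X] :=
  Lagrange.interpolate (range (k + 1)) halfNode fun i =>
    rHalfNodeValue k / (rootFactor k).eval (halfNode i)

noncomputable def rPoly (k : ℕ) : ℚ[X] := rootFactor k * rCofactor k

theorem halfNode_injective : Function.Injective halfNode := fun a b h => by
  simpa [halfNode] using h

theorem eval_rootFactor_neg_natCast {k i : ℕ} (h1 : 1 ≤ i) (h2 : i ≤ k - 1) :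
    (rootFactor k).eval (-(i : ℚ)) = 0 := by
  rw [rootFactor, eval_comp, eval_add, eval_X, eval_one,
    show -(i : ℚ) + 1 = -((i - 1 : ℕ) : ℚ) by push_cast [Nat.cast_sub h1]; ring]
  exact ascPochhammer_eval_neg_coe_nat_of_lt (by omega)

theorem eval_rootFactor_halfNode_ne_zero (k i : ℕ) : (rootFactor k).eval (halfNode i) ≠ 0 := by
  simp only [rootFactor, eval_comp, eval_add, eval_X, eval_one, halfNode, ne_eq,
    ascPochhammer_eval_eq_zero_iff, not_exists, not_and]
  intro m _ hm
  exact natCast_add_half_ne_natCast (m + 1) i (by push_cast; linear_combination hm)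

theorem natDegree_rPoly_le (k : ℕ) : (rPoly k).natDegree ≤ 2 * k - 1 := by
  have h1 : (rootFactor k).natDegree = k - 1 := by
    rw [rootFactor, natDegree_comp, ascPochhammer_natDegree, ← C_1, natDegree_X_add_C, mul_one]
  have h2 : (rCofactor k).natDegree ≤ k := by
    have := Lagrange.degree_interpolate_lt (s := range (k + 1))
      (fun i => rHalfNodeValue k / (rootFactor k).eval (halfNode i)) halfNode_injective.injOn
    rw [card_range] at this
    exact natDegree_le_of_degree_le (Order.le_of_lt_succ this)
  exact natDegree_mul_le.trans (by omega)

theorem eval_rPoly_halfNode {k i : ℕ} (hi : i ≤ k) :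
    (rPoly k).eval (halfNode i) = rHalfNodeValue k := by
  rw [rPoly, eval_mul, rCofactor, Lagrange.eval_interpolate_at_node _ halfNode_injective.injOn
    (mem_range.2 (by omega))]
  exact mul_div_cancel₀ _ (eval_rootFactor_halfNode_ne_zero k i)

theorem rCond_rPoly (k : ℕ) : rCond k (rPoly k) :=
  ⟨natDegree_rPoly_le k,
    fun i h1 h2 => by rw [rPoly, eval_mul, eval_rootFactor_neg_natCast h1 h2, zero_mul],
    fun i hi => eval_rPoly_halfNode hi⟩

theorem nodalWeight_halfNode {k i : ℕ} (hi : i ≤ k) :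
    Lagrange.nodalWeight (range (k + 1)) halfNode i = ((-1) ^ i * i ! * (k - i)! : ℚ)⁻¹ := by
  rw [Lagrange.nodalWeight, prod_inv_distrib, ← prod_erase_range_natCast_sub hi]
  exact congrArg _ (prod_congr rfl fun j _ => by simp only [halfNode]; ring)

theorem eval_ascPochhammer_halfNode {k i : ℕ} (hi : i ≤ k) :
    (ascPochhammer ℚ k).eval (halfNode i) =
      (-1) ^ i * (ascPochhammer ℚ i).eval (1 / 2) * (ascPochhammer ℚ (k - i)).eval (1 / 2) := by
  rw [halfNode, ascPochhammer_eval_sub_natCast _ hi]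
  norm_num

theorem halfNode_mul_eval_rootFactor {k : ℕ} (hk : k ≠ 0) (i : ℕ) :
    halfNode i * (rootFactor k).eval (halfNode i) = (ascPochhammer ℚ k).eval (halfNode i) := by
  obtain ⟨n, rfl⟩ := exists_eq_succ_of_ne_zero hk
  rw [ascPochhammer_succ_left, eval_mul, eval_X, rootFactor, succ_sub_one]

theorem nodalWeight_mul_inv_mul_eval_halfNode {k : ℕ} (hk : k ≠ 0) {i : ℕ} (hi : i ≤ k) :
    Lagrange.nodalWeight (range (k + 1)) halfNode i * (0 - halfNode i)⁻¹ *
        (rHalfNodeValue k / (rootFactor k).eval (halfNode i)) =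
      -(rHalfNodeValue k * 4 ^ k / (2 * k)!) * (2 * k).choose (2 * i) := by
  have hP := halfNode_mul_eval_rootFactor hk i
  rw [eval_ascPochhammer_halfNode hi, ascPochhammer_eval_half_eq_factorial,
    ascPochhammer_eval_half_eq_factorial] at hP
  rw [nodalWeight_halfNode hi, Nat.cast_choose ℚ (by omega : 2 * i ≤ 2 * k),
    show 2 * k - 2 * i = 2 * (k - i) by omega, zero_sub, div_eq_mul_inv, ← neg_inv,
    show (4 : ℚ) ^ k = 4 ^ i * 4 ^ (k - i) by rw [← pow_add, Nat.add_sub_cancel' hi]]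
  have hne := eval_rootFactor_halfNode_ne_zero k i
  have hh : halfNode i ≠ 0 := fun h =>
    natCast_add_half_ne_natCast (K := ℚ) 0 i (by rw [halfNode, sub_eq_zero] at h; simpa using h)
  have hsq : ((-1 : ℚ) ^ i) ^ 2 = 1 := by rw [← pow_mul, pow_mul', neg_one_sq, one_pow]
  field_simp at hP ⊢
  linear_combination ((-1) ^ i * rHalfNodeValue k) * hP
    + (rHalfNodeValue k * (2 * i)! * (2 * (k - i))!) * hsq

theorem eval_zero_nodal_halfNode (k : ℕ) :
    (Lagrange.nodal (range (k + 1)) halfNode).eval 0 =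
      -(1 / 2) * (ascPochhammer ℚ k).eval (1 / 2) := by
  rw [Lagrange.eval_nodal, prod_range_succ', ascPochhammer_eval_eq_prod_range, mul_comm]
  simp only [halfNode]
  push_cast
  congr 1
  · norm_num
  · exact prod_congr rfl fun j _ => by ring

theorem eval_zero_rCofactor {k : ℕ} (hk : k ≠ 0) :
    (rCofactor k).eval 0 = rHalfNodeValue k * 4 ^ (k - 1) / k ! := by
  have hnode : ∀ i ∈ range (k + 1), (0 : ℚ) ≠ halfNode i := fun i _ h =>
    natCast_add_half_ne_natCast (K := ℚ) 0 i
      (by rw [halfNode, eq_sub_iff_add_eq] at h; simpa using h.symm)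
  rw [rCofactor, Lagrange.eval_interpolate_not_at_node _ hnode,
    sum_congr rfl fun i hi =>
      nodalWeight_mul_inv_mul_eval_halfNode hk (Nat.lt_succ_iff.1 (mem_range.1 hi)),
    ← mul_sum, ← Nat.cast_sum, sum_range_choose_two_mul hk, eval_zero_nodal_halfNode,
    ascPochhammer_eval_half_eq_factorial]
  obtain ⟨n, rfl⟩ := exists_eq_succ_of_ne_zero hk
  rw [show 2 * (n + 1) - 1 = 2 * n + 1 by omega, succ_sub_one, Nat.pow_succ, Nat.pow_mul]
  push_cast
  field_simp

theorem rZeroValue_eq {k : ℕ} (hk : k ≠ 0) :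
    rZeroValue k = rHalfNodeValue k * 4 ^ (k - 1) / k := by
  obtain ⟨n, rfl⟩ := exists_eq_succ_of_ne_zero hk
  rw [rZeroValue, rHalfNodeValue, succ_sub_one, show 2 * (n + 1) - 3 = 2 * n - 1 by omega,
    ascPochhammer_eval_half_eq_doubleFactorial,
    show -(((n + 1 : ℕ) : ℤ) - 1) = -(n : ℤ) by push_cast; ring, zpow_neg, zpow_natCast,
    factorial_succ]
  push_cast
  field_simp
  rw [← mul_pow, ← mul_pow]
  norm_num

theorem eval_zero_rPoly {k : ℕ} (hk : k ≠ 0) : (rPoly k).eval 0 = rZeroValue k := by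
  have hroot : (rootFactor k).eval 0 = (k - 1)! := by simp [rootFactor, eval_comp]
  rw [rPoly, eval_mul, hroot, eval_zero_rCofactor hk, rZeroValue_eq hk]
  obtain ⟨n, rfl⟩ := exists_eq_succ_of_ne_zero hk
  rw [succ_sub_one, factorial_succ]
  push_cast
  field_simp

theorem rChar_rPoly {k : ℕ} (hk : k ≠ 0) : rChar k (rPoly k) :=
  ⟨natDegree_rPoly_le k, (rCond_rPoly k).2.1,
    fun _ hi _ hi' => (eval_rPoly_halfNode hi).trans (eval_rPoly_halfNode hi').symm,
    eval_zero_rPoly hk⟩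

theorem rChar.eq {k : ℕ} {p q : ℚ[X]} (hp : rChar k p) (hq : rChar k q) : p = q := by
  set d := p - q
  have hzero : ∀ i : ℕ, i ≤ k - 1 → d.eval (-(i : ℚ)) = 0 := by
    intro i hi
    rcases Nat.eq_zero_or_pos i with rfl | hi0
    · simp [d, hp.2.2.2, hq.2.2.2]
    · simp [d, hp.2.1 i hi0 hi, hq.2.1 i hi0 hi]
  have hhalf : ∀ i < k, d.eval (1 / 2 - ((i + 1 : ℕ) : ℚ)) = d.eval (1 / 2 - (i : ℚ)) := by
    intro i hi
    simp only [d, eval_sub, hp.2.2.1 (i + 1) hi i hi.le, hq.2.2.1 (i + 1) hi i hi.le]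
  have hd := eq_C_eval_zero_of_natDegree_le_card (p := d)
    (injective_sumElim_neg_natCast_half_sub (K := ℚ) (g := fun a : Fin (k - 1) => (a : ℕ))
      (h := fun b : Fin k => (b : ℕ)) Fin.val_injective Fin.val_injective) ?_ ?_
  · have h0 : d.eval 0 = 0 := by simpa using hzero 0 (Nat.zero_le _)
    exact sub_eq_zero.1 (hd.trans (by rw [h0, C_0]))
  · have : d.natDegree ≤ max p.natDegree q.natDegree := natDegree_sub_le p q
    have := hp.1
    have := hq.1
    simp only [Fintype.card_sum, Fintype.card_fin]
    omega
  · rintro (a | b)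
    · have ha := a.isLt
      simp only [Sum.elim_inl]
      rw [show -((a : ℕ) : ℚ) - 1 = -((a + 1 : ℕ) : ℚ) by push_cast; ring,
        hzero _ (by omega), hzero _ (by omega)]
    · simp only [Sum.elim_inr]
      rw [show (1 / 2 : ℚ) - (b : ℕ) - 1 = 1 / 2 - ((b + 1 : ℕ) : ℚ) by push_cast; ring]
      exact hhalf b b.isLt

theorem rCond.eq {k : ℕ} {p q : ℚ[X]} (hp : rCond k p) (hq : rCond k q) : p = q := by
  refine eq_of_natDegree_lt_card_of_eval_eq p q
    (injective_sumElim_neg_natCast_half_sub (K := ℚ) (g := fun a : Fin (k - 1) => (a : ℕ) + 1)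
      (h := fun b : Fin (k + 1) => (b : ℕ)) (fun a b h => Fin.ext (by simpa using h))
      Fin.val_injective) ?_ ?_
  · rintro (a | b)
    · have ha := a.isLt
      simp only [Sum.elim_inl]
      rw [hp.2.1 _ (by omega) (by omega), hq.2.1 _ (by omega) (by omega)]
    · simp only [Sum.elim_inr]
      exact (hp.2.2 b (by omega)).trans (hq.2.2 b (by omega)).symm
  · have := hp.1
    have := hq.1
    simp only [Fintype.card_sum, Fintype.card_fin]
    omega

/-- For every integer `k ≥ 1`, there exists a unique polynomial `p ∈ ℚ[x]` of degree
`≤ 2k−1` such that `p(−i) = 0` for `1 ≤ i ≤ k−1`, `p` is constant on the set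
`S(k) = {1/2 − i : i = 0,…,k}`, and `p(0) = (−1)^{k−1}·(2k−3)!!/k!`.
Moreover, this polynomial equals `r_{(k)}` (i.e. it coincides with any polynomial
satisfying the defining interpolation conditions `rCond k`). -/
theorem r_k_characterization (k : ℕ) (hk : 1 ≤ k) :
    (∃! p : Polynomial ℚ,
      p.natDegree ≤ 2 * k - 1 ∧
      (∀ i : ℕ, 1 ≤ i → i ≤ k - 1 → p.eval (-(i : ℚ)) = 0) ∧
      (∀ i : ℕ, i ≤ k → ∀ i' : ℕ, i' ≤ k →
        p.eval (1 / 2 - (i : ℚ)) = p.eval (1 / 2 - (i' : ℚ))) ∧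
      p.eval 0 = (-1 : ℚ) ^ (k - 1) * (Nat.doubleFactorial (2 * k - 3) : ℚ)
        / (k.factorial : ℚ)) ∧
    (∀ p q : Polynomial ℚ,
      (p.natDegree ≤ 2 * k - 1 ∧
       (∀ i : ℕ, 1 ≤ i → i ≤ k - 1 → p.eval (-(i : ℚ)) = 0) ∧
       (∀ i : ℕ, i ≤ k → ∀ i' : ℕ, i' ≤ k →
         p.eval (1 / 2 - (i : ℚ)) = p.eval (1 / 2 - (i' : ℚ))) ∧
       p.eval 0 = (-1 : ℚ) ^ (k - 1) * (Nat.doubleFactorial (2 * k - 3) : ℚ)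
         / (k.factorial : ℚ)) →
      rCond k q → p = q) := by
  have hr : rChar k (rPoly k) := rChar_rPoly (Nat.one_le_iff_ne_zero.mp hk)
  exact ⟨⟨rPoly k, hr, fun p hp => rChar.eq hp hr⟩,
    fun p q hp hq => (rChar.eq hp hr).trans ((rCond_rPoly k).eq hq)⟩
end

section
/- For every integer k ≥ 1, the constant term of the interpolation polynomial r_{(k)} satisfies r_{(k)}(0) = (−1)^{k−1}·(2k−3)!!/k!. -/
open Polynomial

/-!
The points `1/2 − k + n/2`, `0 ≤ n ≤ 2k`, form an arithmetic progression of step `1/2`: its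
even-indexed members are the half-integers `1/2 − i`, where `r` takes a common value `c`, and its
odd-indexed members are `−(k−1), …, −1, 0`. As `deg r < 2k`, the `2k`-th forward difference of `r`
along this progression vanishes. All odd terms except the last one vanish, so
`2k · r(0) = c · ∑ᵢ C(2k, 2i) = 2^{2k−1} · c`, and `(1/2)_{k−1} = (2k−3)!!/2^{k−1}` gives the value.
-/

open Finset
open scoped Nat

theorem Polynomial.sum_range_alternating_choose_mul_eval_eq_zero {R : Type*} [CommRing R]
    {P : R[X]} {n : ℕ} (hP : P.natDegree < n) (y h : R) :
    ∑ j ∈ range (n + 1), (-1) ^ (n - j) * n.choose j * P.eval (y + j * h) = 0 := by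
  set Q := P.comp (C h * X + C y)
  have hQ : Q.natDegree < n := by
    refine (natDegree_comp_le.trans ?_).trans_lt hP
    simpa using Nat.mul_le_mul_left P.natDegree (natDegree_linear_le (a := h) (b := y))
  have := congr_fun (fwdDiff_iter_eq_zero_of_degree_lt hQ) 0
  rw [fwdDiff_iter_eq_sum_shift, Pi.zero_apply] at this
  convert this using 2 with j
  simp only [Q, nsmul_eq_mul, mul_one, zero_add, eval_comp, eval_add, eval_mul, eval_C, eval_X,
    zsmul_eq_mul, Int.cast_mul, Int.cast_pow, Int.cast_neg, Int.cast_one, Int.cast_natCast]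
  rw [add_comm y, mul_comm (j : R)]

theorem sum_range_choose_mul_one_add_neg_one_pow {R : Type*} [CommRing R] {n : ℕ} (hn : n ≠ 0) :
    ∑ j ∈ range (n + 1), (n.choose j : R) * (1 + (-1) ^ j) = 2 ^ n := by
  have h2 := add_pow (1 : R) 1 n
  have h0 := add_pow (-1 : R) 1 n
  rw [neg_add_cancel, zero_pow hn] at h0
  simp only [one_pow, mul_one, one_mul, one_add_one_eq_two] at h2 h0
  simp only [mul_add, mul_one, sum_add_distrib, h2, mul_comm _ ((-1 : R) ^ _), ← h0, add_zero]

theorem ascPochhammer_eval_half {K : Type*} [Field K] [NeZero (2 : K)] (m : ℕ) :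
    (ascPochhammer K m).eval (1 / 2) = (2 * m - 1)‼ / 2 ^ m := by
  induction m with
  | zero => simp
  | succ m ih =>
    rw [ascPochhammer_succ_eval, ih, show 2 * (m + 1) - 1 = 2 * m + 1 by omega,
      Nat.doubleFactorial_add_one]
    field_simp
    push_cast
    ring

section HalfStepProgression

variable {K : Type*} [Field K] [NeZero (2 : K)] {m : ℕ} {p : K[X]} {c : K}

theorem neg_one_pow_mul_eval_half_step
    (hzero : ∀ i : ℕ, 1 ≤ i → i ≤ m → p.eval (-(i : K)) = 0)
    (hhalf : ∀ i : ℕ, i ≤ m + 1 → p.eval (1 / 2 - i : K) = c) {n : ℕ} (hn : n ≤ 2 * m + 2) :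
    (-1) ^ (2 * m + 2 - n) * p.eval (1 / 2 - (m + 1 : ℕ) + n * (1 / 2) : K)
      = c * ((1 + (-1) ^ n) / 2) - if n = 2 * m + 1 then p.eval 0 else 0 := by
  obtain ⟨i, rfl | rfl⟩ := Nat.even_or_odd' n
  · have hnode : (1 / 2 - (m + 1 : ℕ) + (2 * i : ℕ) * (1 / 2) : K) = 1 / 2 - (m + 1 - i : ℕ) := by
      push_cast [Nat.cast_sub (show i ≤ m + 1 by omega)]
      field_simp
      ring
    rw [hnode, hhalf _ (by omega), if_neg (by omega), Even.neg_one_pow ⟨m + 1 - i, by omega⟩,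
      Even.neg_one_pow ⟨i, by omega⟩]
    field_simp
    ring
  · rw [Odd.neg_one_pow ⟨m - i, by omega⟩, Odd.neg_one_pow ⟨i, rfl⟩]
    rcases (show i ≤ m by omega).eq_or_lt with rfl | hi
    · have hnode : (1 / 2 - (i + 1 : ℕ) + (2 * i + 1 : ℕ) * (1 / 2) : K) = 0 := by
        push_cast
        field_simp
        ring
      rw [hnode, if_pos rfl]
      ring
    · have hnode : (1 / 2 - (m + 1 : ℕ) + (2 * i + 1 : ℕ) * (1 / 2) : K) = -(m - i : ℕ) := by
        push_cast [Nat.cast_sub hi.le]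
        field_simp
        ring
      rw [hnode, hzero _ (by omega) (by omega), if_neg (by omega)]
      ring

theorem two_mul_succ_mul_eval_zero_eq (hdeg : p.natDegree ≤ 2 * m + 1)
    (hzero : ∀ i : ℕ, 1 ≤ i → i ≤ m → p.eval (-(i : K)) = 0)
    (hhalf : ∀ i : ℕ, i ≤ m + 1 → p.eval (1 / 2 - i : K) = c) :
    2 * (m + 1) * p.eval 0 = 2 ^ (2 * m + 1) * c := by
  have hsum := sum_range_alternating_choose_mul_eval_eq_zero (P := p) (n := 2 * m + 2)
    (by omega) (1 / 2 - (m + 1 : ℕ) : K) (1 / 2)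
  rw [sum_congr rfl fun n hn => by
    rw [mul_right_comm, neg_one_pow_mul_eval_half_step hzero hhalf
      (by simpa [Nat.lt_succ_iff] using hn)]] at hsum
  simp only [sub_mul, sum_sub_distrib, ite_mul, zero_mul, sum_ite_eq', mem_range] at hsum
  have heven : ∑ n ∈ range (2 * m + 2 + 1), c * ((1 + (-1) ^ n) / 2) * ((2 * m + 2).choose n : K)
      = 2 ^ (2 * m + 1) * c := by
    rw [show (2 : K) ^ (2 * m + 1) * c = c / 2 * 2 ^ (2 * m + 2) by field_simp; ring,
      ← sum_range_choose_mul_one_add_neg_one_pow (by omega), mul_sum]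
    exact sum_congr rfl fun n _ => by ring
  rw [heven, if_pos (by omega), Nat.choose_succ_self_right] at hsum
  push_cast at hsum
  linear_combination -hsum

end HalfStepProgression

/-- For every integer `k ≥ 1`, the constant term of the interpolation polynomial
`r_{(k)}` satisfies `r_{(k)}(0) = (−1)^{k−1}·(2k−3)!!/k!`. -/
theorem r_k_constant_term (k : ℕ) (hk : 1 ≤ k) (p : Polynomial ℚ) (hp : rCond k p) :
    p.eval 0
      = (-1 : ℚ) ^ (k - 1) * (Nat.doubleFactorial (2 * k - 3) : ℚ) / (k.factorial : ℚ) := by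
  obtain ⟨m, rfl⟩ := Nat.exists_eq_add_of_le' hk
  obtain ⟨hdeg, hzero, hhalf⟩ := hp
  simp only [Nat.add_sub_cancel, Nat.cast_add, Nat.cast_one, add_sub_cancel_right,
    ascPochhammer_eval_half] at hzero hhalf
  have key := two_mul_succ_mul_eval_zero_eq (by omega) hzero hhalf
  rw [zpow_neg, zpow_natCast, neg_pow, mul_inv, ← inv_pow, inv_neg_one] at key
  rw [Nat.add_sub_cancel, show 2 * (m + 1) - 3 = 2 * m - 1 by omega, Nat.factorial_succ]
  refine mul_left_cancel₀ (show (2 * (m + 1) : ℚ) ≠ 0 by positivity) (key.trans ?_)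
  push_cast
  field_simp
  ring
end

section
/- Let m ∈ ℝ and let u : ℝ → ℝ be given by u(r) = m·(1 − r²/4)⁻¹, and define (Lf)(r) = f''(r) − m·r·(1 − r²/4)⁻¹·f'(r) − m·(m − 1/2)·(1 − r²/4)⁻¹·f(r). Then (L(Lu))(0) = (1/4)·m·(m−1)·(4m³ − 5m − 6). -/
/-- The Yamabe-type operator `L` of `dr² + h_r` on the round sphere `S^{2m}`, acting on
functions of `r` alone:
`(Lf)(r) = f''(r) − m·r·(1 − r²/4)⁻¹·f'(r) − m·(m − 1/2)·(1 − r²/4)⁻¹·f(r)`. -/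
noncomputable def Lop (m : ℝ) (f : ℝ → ℝ) : ℝ → ℝ := fun r =>
  deriv (deriv f) r - m * r * (1 - r ^ 2 / 4)⁻¹ * deriv f r
    - m * (m - 1 / 2) * (1 - r ^ 2 / 4)⁻¹ * f r

/-!
With `w(r) = (1 - r²/4)⁻¹` one has `w' = (r/2)·w²` and `r²·w = 4w - 4`, so `L` maps every
function `p ∘ w`, `p` a polynomial, to `(D p) ∘ w` for an explicit operator `D` on polynomials.
Since `u = (m X) ∘ w` and `w(0) = 1`, the value `(L(Lu))(0)` is the evaluation of
`D (D (m X))` at `1`.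
-/

open Polynomial Filter Topology

namespace RoundSphere

noncomputable def weight (r : ℝ) : ℝ := (1 - r ^ 2 / 4)⁻¹

/-- The operator on polynomials that `Lop m` induces on functions `p ∘ weight`. -/
noncomputable def onPolynomial (m : ℝ) (p : ℝ[X]) : ℝ[X] :=
  (X ^ 4 - X ^ 3) * derivative (derivative p)
    + (C (2 - 2 * m) * X ^ 3 + C (2 * m - 3 / 2) * X ^ 2) * derivative p
    - C (m * (m - 1 / 2)) * X * p

@[simp] lemma weight_zero : weight 0 = 1 := by norm_num [weight]

lemma one_sub_sq_div_four_ne_zero {r : ℝ} (hr : r ^ 2 ≠ 4) : 1 - r ^ 2 / 4 ≠ 0 := by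
  contrapose! hr
  linarith

lemma sq_mul_weight {r : ℝ} (hr : r ^ 2 ≠ 4) : r ^ 2 * weight r = 4 * weight r - 4 := by
  have h := one_sub_sq_div_four_ne_zero hr
  unfold weight
  field_simp
  ring

lemma hasDerivAt_weight {r : ℝ} (hr : r ^ 2 ≠ 4) :
    HasDerivAt weight (r / 2 * weight r ^ 2) r := by
  have hden : HasDerivAt (fun x : ℝ => 1 - x ^ 2 / 4) (-(r / 2)) r :=
    (((hasDerivAt_pow 2 r).div_const 4).const_sub 1).congr_deriv (by ring)
  refine (hden.fun_inv (one_sub_sq_div_four_ne_zero hr)).congr_deriv ?_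
  rw [weight, inv_pow, neg_neg, div_eq_mul_inv]

lemma hasDerivAt_eval_weight (p : ℝ[X]) {r : ℝ} (hr : r ^ 2 ≠ 4) :
    HasDerivAt (fun r => p.eval (weight r))
      ((derivative p).eval (weight r) * (r / 2 * weight r ^ 2)) r :=
  (p.hasDerivAt (weight r)).comp r (hasDerivAt_weight hr)

lemma isOpen_sq_ne_four : IsOpen {r : ℝ | r ^ 2 ≠ 4} :=
  isOpen_ne_fun (continuous_pow 2) continuous_const

lemma deriv_deriv_eval_weight (p : ℝ[X]) {r : ℝ} (hr : r ^ 2 ≠ 4) :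
    deriv (deriv fun r => p.eval (weight r)) r
      = (derivative (derivative p)).eval (weight r) * (r / 2 * weight r ^ 2) ^ 2
        + (derivative p).eval (weight r) * (weight r ^ 2 / 2 + r ^ 2 / 2 * weight r ^ 3) := by
  have hderiv : deriv (fun r => p.eval (weight r))
      =ᶠ[𝓝 r] fun r => (derivative p).eval (weight r) * (r / 2 * weight r ^ 2) :=
    eventually_of_mem (isOpen_sq_ne_four.mem_nhds hr) fun x hx =>
      (hasDerivAt_eval_weight p hx).deriv
  have hfactor : HasDerivAt (fun r => r / 2 * weight r ^ 2)
      (1 / 2 * weight r ^ 2 + r / 2 * (2 * weight r * (r / 2 * weight r ^ 2))) r := by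
    refine (((hasDerivAt_id' r).div_const 2).fun_mul
      ((hasDerivAt_weight hr).fun_pow 2)).congr_deriv ?_
    push_cast
    ring
  rw [hderiv.deriv_eq, ((hasDerivAt_eval_weight _ hr).fun_mul hfactor).deriv]
  ring

lemma Lop_eval_weight (m : ℝ) (p : ℝ[X]) {r : ℝ} (hr : r ^ 2 ≠ 4) :
    Lop m (fun r => p.eval (weight r)) r = (onPolynomial m p).eval (weight r) := by
  have hw := sq_mul_weight hr
  simp only [Lop, deriv_deriv_eval_weight p hr, (hasDerivAt_eval_weight p hr).deriv,
    onPolynomial, eval_sub, eval_add, eval_mul, eval_pow, eval_X, eval_C]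
  rw [← weight]
  linear_combination
    (weight r ^ 3 / 4 * (derivative (derivative p)).eval (weight r)
      + (1 - m) / 2 * weight r ^ 2 * (derivative p).eval (weight r)) * hw

lemma Lop_congr_of_eventuallyEq (m : ℝ) {f g : ℝ → ℝ} {x : ℝ} (h : f =ᶠ[𝓝 x] g) :
    Lop m f x = Lop m g x := by
  simp only [Lop, h.deriv.deriv_eq, h.deriv_eq, h.eq_of_nhds]

lemma Lop_Lop_eval_weight (m : ℝ) (p : ℝ[X]) {r : ℝ} (hr : r ^ 2 ≠ 4) :
    Lop m (Lop m fun r => p.eval (weight r)) r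
      = (onPolynomial m (onPolynomial m p)).eval (weight r) := by
  have hLop : Lop m (fun r => p.eval (weight r))
      =ᶠ[𝓝 r] fun r => (onPolynomial m p).eval (weight r) :=
    eventually_of_mem (isOpen_sq_ne_four.mem_nhds hr) fun x hx => Lop_eval_weight m p hx
  rw [Lop_congr_of_eventuallyEq m hLop, Lop_eval_weight m _ hr]

end RoundSphere

open RoundSphere in
/-- With `u(r) = m·(1 − r²/4)⁻¹`, one has `(L(Lu))(0) = (1/4)·m·(m−1)·(4m³ − 5m − 6)`. -/
theorem Lop_sq_u_at_zero (m : ℝ) :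
    Lop m (Lop m (fun r => m * (1 - r ^ 2 / 4)⁻¹)) 0
      = (1 / 4) * (m * (m - 1) * (4 * m ^ 3 - 5 * m - 6)) := by
  have hu : (fun r : ℝ => m * (1 - r ^ 2 / 4)⁻¹) = fun r => (C m * X).eval (weight r) := by
    funext r
    simp [weight]
  rw [hu, Lop_Lop_eval_weight m _ (by norm_num), weight_zero]
  simp only [onPolynomial, derivative_mul, derivative_sub, derivative_add, derivative_C,
    derivative_X, derivative_X_pow, derivative_one, eval_sub, eval_add, eval_mul, eval_pow, eval_X,
    eval_C, eval_one, derivative_zero, eval_zero]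
  ring
end

section
/- Let m ∈ ℝ and let u : ℝ → ℝ be given by u(r) = m·(1 − r²/4)⁻¹, and define (Lf)(r) = f''(r) − m·r·(1 − r²/4)⁻¹·f'(r) − m·(m − 1/2)·(1 − r²/4)⁻¹·f(r). Then (L(L(Lu)))(0) = −(1/8)·m·(m−1)·(8m⁵ − 4m⁴ − 22m³ − 31m² + 25m + 90). -/
noncomputable def S : ℝ → ℝ := fun r => (1 - r ^ 2 / 4)⁻¹

noncomputable def F0 (m : ℝ) : ℝ → ℝ := fun r =>
  (((1/1) * m ^ 1) * (r ^ 0 * S r ^ 1))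

noncomputable def F1 (m : ℝ) : ℝ → ℝ := fun r =>
  (((1/2) * m ^ 1 + (1/2) * m ^ 2 + (-1/1) * m ^ 3) * (r ^ 0 * S r ^ 2))
  + (((1/2) * m ^ 1 + (-1/2) * m ^ 2) * (r ^ 2 * S r ^ 3))

noncomputable def F2 (m : ℝ) : ℝ → ℝ := fun r =>
  (((3/2) * m ^ 1 + (-1/4) * m ^ 2 + (-5/4) * m ^ 3 + (-1/1) * m ^ 4 + (1/1) * m ^ 5) * (r ^ 0 * S r ^ 3))
  + (((9/2) * m ^ 1 + (-17/4) * m ^ 2 + (-7/4) * m ^ 3 + (3/2) * m ^ 4) * (r ^ 2 * S r ^ 4))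
  + (((3/2) * m ^ 1 + (-9/4) * m ^ 2 + (3/4) * m ^ 3) * (r ^ 4 * S r ^ 5))

noncomputable def F3 (m : ℝ) : ℝ → ℝ := fun r =>
  (((45/4) * m ^ 1 + (-65/8) * m ^ 2 + (-7/1) * m ^ 3 + (9/8) * m ^ 4 + (9/4) * m ^ 5 + (3/2) * m ^ 6 + (-1/1) * m ^ 7) * (r ^ 0 * S r ^ 4))
  + (((135/2) * m ^ 1 + (-317/4) * m ^ 2 + (-10/1) * m ^ 3 + (83/4) * m ^ 4 + (4/1) * m ^ 5 + (-3/1) * m ^ 6) * (r ^ 2 * S r ^ 5))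
  + (((225/4) * m ^ 1 + (-689/8) * m ^ 2 + (23/1) * m ^ 3 + (85/8) * m ^ 4 + (-15/4) * m ^ 5) * (r ^ 4 * S r ^ 6))
  + (((45/4) * m ^ 1 + (-165/8) * m ^ 2 + (45/4) * m ^ 3 + (-15/8) * m ^ 4) * (r ^ 6 * S r ^ 7))

noncomputable def G0 (m : ℝ) : ℝ → ℝ := fun r =>
  (((1/2) * m ^ 1) * (r ^ 1 * S r ^ 2))

noncomputable def H0 (m : ℝ) : ℝ → ℝ := fun r =>
  (((1/2) * m ^ 1) * (r ^ 0 * S r ^ 2))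
  + (((1/2) * m ^ 1) * (r ^ 2 * S r ^ 3))

noncomputable def G1 (m : ℝ) : ℝ → ℝ := fun r =>
  (((3/2) * m ^ 1 + (-1/2) * m ^ 2 + (-1/1) * m ^ 3) * (r ^ 1 * S r ^ 3))
  + (((3/4) * m ^ 1 + (-3/4) * m ^ 2) * (r ^ 3 * S r ^ 4))

noncomputable def H1 (m : ℝ) : ℝ → ℝ := fun r =>
  (((3/2) * m ^ 1 + (-1/2) * m ^ 2 + (-1/1) * m ^ 3) * (r ^ 0 * S r ^ 3))
  + (((9/2) * m ^ 1 + (-3/1) * m ^ 2 + (-3/2) * m ^ 3) * (r ^ 2 * S r ^ 4))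
  + (((3/2) * m ^ 1 + (-3/2) * m ^ 2) * (r ^ 4 * S r ^ 5))

noncomputable def G2 (m : ℝ) : ℝ → ℝ := fun r =>
  (((45/4) * m ^ 1 + (-71/8) * m ^ 2 + (-43/8) * m ^ 3 + (3/2) * m ^ 4 + (3/2) * m ^ 5) * (r ^ 1 * S r ^ 4))
  + (((15/1) * m ^ 1 + (-35/2) * m ^ 2 + (-1/2) * m ^ 3 + (3/1) * m ^ 4) * (r ^ 3 * S r ^ 5))
  + (((15/4) * m ^ 1 + (-45/8) * m ^ 2 + (15/8) * m ^ 3) * (r ^ 5 * S r ^ 6))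

noncomputable def H2 (m : ℝ) : ℝ → ℝ := fun r =>
  (((45/4) * m ^ 1 + (-71/8) * m ^ 2 + (-43/8) * m ^ 3 + (3/2) * m ^ 4 + (3/2) * m ^ 5) * (r ^ 0 * S r ^ 4))
  + (((135/2) * m ^ 1 + (-281/4) * m ^ 2 + (-49/4) * m ^ 3 + (12/1) * m ^ 4 + (3/1) * m ^ 5) * (r ^ 2 * S r ^ 5))
  + (((225/4) * m ^ 1 + (-575/8) * m ^ 2 + (65/8) * m ^ 3 + (15/2) * m ^ 4) * (r ^ 4 * S r ^ 6))
  + (((45/4) * m ^ 1 + (-135/8) * m ^ 2 + (45/8) * m ^ 3) * (r ^ 6 * S r ^ 7))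

lemma hS (r : ℝ) (h : 1 - r ^ 2 / 4 ≠ 0) : HasDerivAt S (r / 2 * S r ^ 2) r := by
  have h1 : HasDerivAt (fun x : ℝ => 1 - x ^ 2 / 4) (-(r / 2)) r := by
    have := ((hasDerivAt_pow 2 r).div_const 4).const_sub 1
    refine this.congr_deriv ?_
    push_cast
    ring
  have H : HasDerivAt S _ r := h1.inv h
  refine H.congr_deriv ?_
  unfold S
  field_simp

lemma hterm (c : ℝ) (j k : ℕ) (r : ℝ) (h : 1 - r ^ 2 / 4 ≠ 0) :
    HasDerivAt (fun x => c * (x ^ j * S x ^ k))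
      (c * ((j : ℝ) * r ^ (j - 1) * S r ^ k
        + r ^ j * ((k : ℝ) * S r ^ (k - 1) * (r / 2 * S r ^ 2)))) r :=
  ((hasDerivAt_pow j r).mul ((hS r h).pow k)).const_mul c

lemma hcongr {f : ℝ → ℝ} {a b x : ℝ} (h : HasDerivAt f a x) (e : b = a) :
    HasDerivAt f b x := e ▸ h

lemma hdF0 (m r : ℝ) (h : 1 - r ^ 2 / 4 ≠ 0) : HasDerivAt (F0 m) (G0 m r) r :=
  hcongr (hterm ((1/1) * m ^ 1) 0 1 r h) (by unfold G0; norm_num; try ring)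

lemma hdG0 (m r : ℝ) (h : 1 - r ^ 2 / 4 ≠ 0) : HasDerivAt (G0 m) (H0 m r) r :=
  hcongr (hterm ((1/2) * m ^ 1) 1 2 r h) (by unfold H0; norm_num; try ring)

lemma hdF1 (m r : ℝ) (h : 1 - r ^ 2 / 4 ≠ 0) : HasDerivAt (F1 m) (G1 m r) r :=
  hcongr ((hterm ((1/2) * m ^ 1 + (1/2) * m ^ 2 + (-1/1) * m ^ 3) 0 2 r h).add
    (hterm ((1/2) * m ^ 1 + (-1/2) * m ^ 2) 2 3 r h))
    (by unfold G1; norm_num; try ring)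

lemma hdG1 (m r : ℝ) (h : 1 - r ^ 2 / 4 ≠ 0) : HasDerivAt (G1 m) (H1 m r) r :=
  hcongr ((hterm ((3/2) * m ^ 1 + (-1/2) * m ^ 2 + (-1/1) * m ^ 3) 1 3 r h).add
    (hterm ((3/4) * m ^ 1 + (-3/4) * m ^ 2) 3 4 r h))
    (by unfold H1; norm_num; try ring)

lemma hdF2 (m r : ℝ) (h : 1 - r ^ 2 / 4 ≠ 0) : HasDerivAt (F2 m) (G2 m r) r :=
  hcongr (((hterm ((3/2) * m ^ 1 + (-1/4) * m ^ 2 + (-5/4) * m ^ 3 + (-1/1) * m ^ 4 + (1/1) * m ^ 5) 0 3 r h).add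
    (hterm ((9/2) * m ^ 1 + (-17/4) * m ^ 2 + (-7/4) * m ^ 3 + (3/2) * m ^ 4) 2 4 r h)).add
    (hterm ((3/2) * m ^ 1 + (-9/4) * m ^ 2 + (3/4) * m ^ 3) 4 5 r h))
    (by unfold G2; norm_num; try ring)

lemma hdG2 (m r : ℝ) (h : 1 - r ^ 2 / 4 ≠ 0) : HasDerivAt (G2 m) (H2 m r) r :=
  hcongr (((hterm ((45/4) * m ^ 1 + (-71/8) * m ^ 2 + (-43/8) * m ^ 3 + (3/2) * m ^ 4 + (3/2) * m ^ 5) 1 4 r h).add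
    (hterm ((15/1) * m ^ 1 + (-35/2) * m ^ 2 + (-1/2) * m ^ 3 + (3/1) * m ^ 4) 3 5 r h)).add
    (hterm ((15/4) * m ^ 1 + (-45/8) * m ^ 2 + (15/8) * m ^ 3) 5 6 r h))
    (by unfold H2; norm_num; try ring)

lemma hopen : IsOpen {x : ℝ | 1 - x ^ 2 / 4 ≠ 0} := by
  have hc : Continuous fun x : ℝ => 1 - x ^ 2 / 4 := by continuity
  exact isOpen_ne.preimage hc

lemma Lstep (m : ℝ) {f g h2 : ℝ → ℝ}
    (hf : ∀ x, 1 - x ^ 2 / 4 ≠ 0 → HasDerivAt f (g x) x)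
    (hg : ∀ x, 1 - x ^ 2 / 4 ≠ 0 → HasDerivAt g (h2 x) x)
    {r : ℝ} (hr : 1 - r ^ 2 / 4 ≠ 0) :
    Lop m f r = h2 r - m * r * (1 - r ^ 2 / 4)⁻¹ * g r
      - m * (m - 1 / 2) * (1 - r ^ 2 / 4)⁻¹ * f r := by
  have hev : deriv f =ᶠ[nhds r] g := by
    filter_upwards [hopen.mem_nhds hr] with x hx using (hf x hx).deriv
  have hd2 : deriv (deriv f) r = h2 r := by
    rw [hev.deriv_eq]; exact (hg r hr).deriv
  unfold Lop
  rw [hd2, (hf r hr).deriv]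

set_option maxHeartbeats 2000000 in
lemma step1 (m : ℝ) {r : ℝ} (hr : 1 - r ^ 2 / 4 ≠ 0) : Lop m (F0 m) r = F1 m r := by
  rw [Lstep m (hdF0 m) (hdG0 m) hr]
  unfold F0 F1 G0 H0 S
  set t := 1 - r ^ 2 / 4 with htdef
  field_simp
  ring

set_option maxHeartbeats 2000000 in
lemma step2 (m : ℝ) {r : ℝ} (hr : 1 - r ^ 2 / 4 ≠ 0) : Lop m (F1 m) r = F2 m r := by
  rw [Lstep m (hdF1 m) (hdG1 m) hr]
  unfold F1 F2 G1 H1 S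
  set t := 1 - r ^ 2 / 4 with htdef
  field_simp
  ring

set_option maxHeartbeats 4000000 in
lemma step3 (m : ℝ) {r : ℝ} (hr : 1 - r ^ 2 / 4 ≠ 0) : Lop m (F2 m) r = F3 m r := by
  rw [Lstep m (hdF2 m) (hdG2 m) hr]
  unfold F2 F3 G2 H2 S
  set t := 1 - r ^ 2 / 4 with htdef
  field_simp
  ring

lemma Lop_congr (m : ℝ) {F G : ℝ → ℝ} {x : ℝ} (h : F =ᶠ[nhds x] G) :
    Lop m F x = Lop m G x := by
  unfold Lop
  rw [h.deriv_eq, h.eq_of_nhds, (h.deriv).deriv_eq]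

/-- With `u(r) = m·(1 − r²/4)⁻¹`, one has
`(L(L(Lu)))(0) = −(1/8)·m·(m−1)·(8m⁵ − 4m⁴ − 22m³ − 31m² + 25m + 90)`. -/
theorem Lop_cube_u_at_zero (m : ℝ) :
    Lop m (Lop m (Lop m (fun r => m * (1 - r ^ 2 / 4)⁻¹))) 0
      = -(1 / 8) * (m * (m - 1)
          * (8 * m ^ 5 - 4 * m ^ 4 - 22 * m ^ 3 - 31 * m ^ 2 + 25 * m + 90)) := by
  have hu : (fun r : ℝ => m * (1 - r ^ 2 / 4)⁻¹) = F0 m := by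
    funext y; simp [F0, S]
  have key1 : ∀ x, 1 - x ^ 2 / 4 ≠ 0 → Lop m (Lop m (F0 m)) x = F2 m x := by
    intro x hx
    have hev : Lop m (F0 m) =ᶠ[nhds x] F1 m := by
      filter_upwards [hopen.mem_nhds hx] with y hy using step1 m hy
    rw [Lop_congr m hev, step2 m hx]
  have h0 : (1 : ℝ) - (0 : ℝ) ^ 2 / 4 ≠ 0 := by norm_num
  have hev2 : Lop m (Lop m (F0 m)) =ᶠ[nhds (0 : ℝ)] F2 m := by
    filter_upwards [hopen.mem_nhds h0] with y hy using key1 y hy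
  rw [hu, Lop_congr m hev2, step3 m h0]
  unfold F3 S
  norm_num
  try ring
end
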